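/- Fix c ∈ (0, 1/2), set a = 1 - c and b = 2 - c, and for x ∈ (0,1) define f(x) = (2-c)³ x³ e^{bx} / (e^{ax} - 1) and g(x) = (2-c)³ x³ e^{bx} / ((e^{ax} - 1)(1 - e^{-(a²/c) x})). Then f and g are (strictly) increasing on (0,1), and there exist absolute constants C_f, C_g > 0, independent of c and x, such that for all x ∈ (0,1): 0 ≤ f(x) - f((1-c)² x) ≤ C_f c x² and 0 ≤ g(x) - g((1-c)² x) ≤ C_g (c / (1 - e^{-((1-c)²/c) x})) x². -/

import Mathlib

open Real
open scoped BigOperators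

set_option maxHeartbeats 1000000

lemma aux2 {t : ℝ} (ht0 : 0 < t) (ht1 : t ≤ 1) :
    0 < 2 * (Real.exp t - 1) - t * Real.exp t := by
  have hd : ∀ u : ℝ, HasDerivAt (fun u => 2 * (Real.exp u - 1) - u * Real.exp u)
      (Real.exp u * (1 - u)) u := by
    intro u
    have h1 : HasDerivAt (fun u => 2 * (Real.exp u - 1)) (2 * Real.exp u) u :=
      ((Real.hasDerivAt_exp u).sub_const 1).const_mul 2
    have h2 : HasDerivAt (fun u : ℝ => u * Real.exp u)
        (1 * Real.exp u + u * Real.exp u) u :=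
      (hasDerivAt_id u).mul (Real.hasDerivAt_exp u)
    exact (h1.sub h2).congr_deriv (by ring)
  have hmono : StrictMonoOn (fun u => 2 * (Real.exp u - 1) - u * Real.exp u)
      (Set.Icc (0:ℝ) 1) := by
    apply strictMonoOn_of_deriv_pos (convex_Icc 0 1)
    · exact Continuous.continuousOn (by continuity)
    · intro u hu
      rw [interior_Icc] at hu
      rw [(hd u).deriv]
      have := Real.exp_pos u
      nlinarith [hu.1, hu.2]
  have := hmono (Set.left_mem_Icc.mpr one_pos.le) ⟨ht0.le, ht1⟩ ht0
  simpa using this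

lemma mono2 : StrictMonoOn (fun t : ℝ => t^2 / (Real.exp t - 1)) (Set.Ioo 0 1) := by
  have hden : ∀ t : ℝ, 0 < t → 0 < Real.exp t - 1 := by
    intro t ht
    have := Real.add_one_lt_exp (ne_of_gt ht)
    linarith
  apply strictMonoOn_of_deriv_pos (convex_Ioo 0 1)
  · apply ContinuousOn.div (continuous_pow 2).continuousOn
      ((Real.continuous_exp.sub continuous_const).continuousOn)
    intro t ht
    exact (hden t ht.1).ne'
  · intro t ht
    rw [interior_Ioo] at ht
    have hd : HasDerivAt (fun t : ℝ => t^2 / (Real.exp t - 1))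
        ((2*t*(Real.exp t - 1) - t^2 * Real.exp t) / (Real.exp t - 1)^2) t := by
      have h1 : HasDerivAt (fun t : ℝ => t^2) (2*t) t := by
        simpa using hasDerivAt_pow 2 t
      have h2 : HasDerivAt (fun t : ℝ => Real.exp t - 1) (Real.exp t) t :=
        (Real.hasDerivAt_exp t).sub_const 1
      exact h1.div h2 (hden t ht.1).ne'
    rw [hd.deriv]
    apply div_pos
    · nlinarith [aux2 ht.1 ht.2.le, ht.1]
    · exact pow_pos (hden t ht.1) 2

lemma monoU : StrictMonoOn (fun u : ℝ => u / (1 - Real.exp (-u))) (Set.Ioi 0) := by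
  have hden : ∀ u : ℝ, 0 < u → 0 < 1 - Real.exp (-u) := by
    intro u hu
    have : Real.exp (-u) < 1 := Real.exp_lt_one_iff.mpr (by linarith)
    linarith
  apply strictMonoOn_of_deriv_pos (convex_Ioi 0)
  · apply ContinuousOn.div continuousOn_id
      ((continuous_const.sub (Real.continuous_exp.comp continuous_neg)).continuousOn)
    intro u hu
    exact (hden u hu).ne'
  · intro u hu
    rw [interior_Ioi] at hu
    have hu0 : (0:ℝ) < u := hu
    have hD := hden u hu0
    have hd : HasDerivAt (fun u : ℝ => u / (1 - Real.exp (-u)))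
        ((1 * (1 - Real.exp (-u)) - u * Real.exp (-u)) / (1 - Real.exp (-u))^2) u := by
      have h1 : HasDerivAt (fun u : ℝ => Real.exp (-u)) (-Real.exp (-u)) u := by
        simpa [Function.comp_def] using ((Real.hasDerivAt_exp (-u)).comp u (hasDerivAt_neg u))
      have h2 : HasDerivAt (fun u : ℝ => 1 - Real.exp (-u)) (Real.exp (-u)) u := by
        simpa using h1.const_sub 1
      exact (hasDerivAt_id u).div h2 hD.ne'
    rw [hd.deriv]
    apply div_pos
    · have h := Real.add_one_lt_exp (ne_of_gt hu0)
      have hE : Real.exp (-u) * Real.exp u = 1 := by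
        rw [← Real.exp_add]; simp
      have hE0 : 0 < Real.exp (-u) := Real.exp_pos _
      nlinarith [h, hE, hE0]
    · positivity

lemma q_mono {a : ℝ} (ha0 : 0 < a) (ha1 : a < 1) :
    StrictMonoOn (fun x : ℝ => x^2 / (Real.exp (a*x) - 1)) (Set.Ioo 0 1) := by
  intro x1 hx1 x2 hx2 h12
  have ht1 : a*x1 ∈ Set.Ioo (0:ℝ) 1 := ⟨mul_pos ha0 hx1.1, by nlinarith [hx1.2]⟩
  have ht2 : a*x2 ∈ Set.Ioo (0:ℝ) 1 := ⟨mul_pos ha0 hx2.1, by nlinarith [hx2.2]⟩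
  have hm := mono2 ht1 ht2 (by nlinarith)
  have hne1 : Real.exp (a*x1) - 1 ≠ 0 := by
    have := Real.add_one_lt_exp (ne_of_gt ht1.1); intro h; nlinarith [ht1.1]
  have hne2 : Real.exp (a*x2) - 1 ≠ 0 := by
    have := Real.add_one_lt_exp (ne_of_gt ht2.1); intro h; nlinarith [ht2.1]
  have e1 : x1^2 / (Real.exp (a*x1) - 1)
      = ((a*x1)^2 / (Real.exp (a*x1) - 1)) * (a^2)⁻¹ := by
    field_simp
  have e2 : x2^2 / (Real.exp (a*x2) - 1)
      = ((a*x2)^2 / (Real.exp (a*x2) - 1)) * (a^2)⁻¹ := by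
    field_simp
  simp only [e1, e2]
  exact mul_lt_mul_of_pos_right hm (by positivity)

lemma r_mono {k : ℝ} (hk : 0 < k) :
    StrictMonoOn (fun x : ℝ => x / (1 - Real.exp (-k * x))) (Set.Ioi 0) := by
  intro x1 hx1 x2 hx2 h12
  have hx1' : (0:ℝ) < x1 := hx1
  have hx2' : (0:ℝ) < x2 := hx2
  have h1 : k*x1 ∈ Set.Ioi (0:ℝ) := mul_pos hk hx1'
  have h2 : k*x2 ∈ Set.Ioi (0:ℝ) := mul_pos hk hx2'
  have hm := monoU h1 h2 (by nlinarith)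
  have hD1 : 0 < 1 - Real.exp (-(k*x1)) := by
    have : Real.exp (-(k*x1)) < 1 := Real.exp_lt_one_iff.mpr (by nlinarith)
    linarith
  have hD2 : 0 < 1 - Real.exp (-(k*x2)) := by
    have : Real.exp (-(k*x2)) < 1 := Real.exp_lt_one_iff.mpr (by nlinarith)
    linarith
  simp only [neg_mul]
  have e1 : x1 / (1 - Real.exp (-(k*x1)))
      = ((k*x1) / (1 - Real.exp (-(k*x1)))) * k⁻¹ := by
    field_simp
  have e2 : x2 / (1 - Real.exp (-(k*x2)))
      = ((k*x2) / (1 - Real.exp (-(k*x2)))) * k⁻¹ := by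
    field_simp
  rw [e1, e2]
  exact mul_lt_mul_of_pos_right hm (by positivity)

noncomputable section

/-- The utility lemma: for `c ∈ (0, 1/2)`, `a = 1 - c`, `b = 2 - c`, the functions
`f(x) = (2-c)³ x³ e^{bx} / (e^{ax} - 1)` and
`g(x) = (2-c)³ x³ e^{bx} / ((e^{ax} - 1)(1 - e^{-(a²/c)x}))`
are strictly increasing on `(0,1)`, and there are absolute constants `C_f, C_g > 0`
(independent of `c` and `x`) such that for all `x ∈ (0,1)`,
`0 ≤ f(x) - f((1-c)²x) ≤ C_f c x²` and
`0 ≤ g(x) - g((1-c)²x) ≤ C_g (c / (1 - e^{-((1-c)²/c)x})) x²`. -/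
theorem utility_lemma :
    ∃ Cf Cg : ℝ, 0 < Cf ∧ 0 < Cg ∧
      ∀ c : ℝ, c ∈ Set.Ioo (0 : ℝ) (1 / 2) →
        (StrictMonoOn
            (fun x : ℝ => (2 - c) ^ 3 * x ^ 3 * Real.exp ((2 - c) * x) /
              (Real.exp ((1 - c) * x) - 1)) (Set.Ioo (0 : ℝ) 1)) ∧
        (StrictMonoOn
            (fun x : ℝ => (2 - c) ^ 3 * x ^ 3 * Real.exp ((2 - c) * x) /
              ((Real.exp ((1 - c) * x) - 1) *
                (1 - Real.exp (-((1 - c) ^ 2 / c) * x)))) (Set.Ioo (0 : ℝ) 1)) ∧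
        ∀ x : ℝ, x ∈ Set.Ioo (0 : ℝ) 1 →
          (0 ≤ (fun y : ℝ => (2 - c) ^ 3 * y ^ 3 * Real.exp ((2 - c) * y) /
                  (Real.exp ((1 - c) * y) - 1)) x -
                (fun y : ℝ => (2 - c) ^ 3 * y ^ 3 * Real.exp ((2 - c) * y) /
                  (Real.exp ((1 - c) * y) - 1)) ((1 - c) ^ 2 * x)) ∧
          ((fun y : ℝ => (2 - c) ^ 3 * y ^ 3 * Real.exp ((2 - c) * y) /
                  (Real.exp ((1 - c) * y) - 1)) x -
                (fun y : ℝ => (2 - c) ^ 3 * y ^ 3 * Real.exp ((2 - c) * y) /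
                  (Real.exp ((1 - c) * y) - 1)) ((1 - c) ^ 2 * x)
              ≤ Cf * c * x ^ 2) ∧
          (0 ≤ (fun y : ℝ => (2 - c) ^ 3 * y ^ 3 * Real.exp ((2 - c) * y) /
                  ((Real.exp ((1 - c) * y) - 1) *
                    (1 - Real.exp (-((1 - c) ^ 2 / c) * y)))) x -
                (fun y : ℝ => (2 - c) ^ 3 * y ^ 3 * Real.exp ((2 - c) * y) /
                  ((Real.exp ((1 - c) * y) - 1) *
                    (1 - Real.exp (-((1 - c) ^ 2 / c) * y)))) ((1 - c) ^ 2 * x)) ∧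
          ((fun y : ℝ => (2 - c) ^ 3 * y ^ 3 * Real.exp ((2 - c) * y) /
                  ((Real.exp ((1 - c) * y) - 1) *
                    (1 - Real.exp (-((1 - c) ^ 2 / c) * y)))) x -
                (fun y : ℝ => (2 - c) ^ 3 * y ^ 3 * Real.exp ((2 - c) * y) /
                  ((Real.exp ((1 - c) * y) - 1) *
                    (1 - Real.exp (-((1 - c) ^ 2 / c) * y)))) ((1 - c) ^ 2 * x)
              ≤ Cg * (c / (1 - Real.exp (-((1 - c) ^ 2 / c) * x))) * x ^ 2) := by
  refine ⟨160 * Real.exp 2, 160 * Real.exp 2, by positivity, by positivity, ?_⟩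
  intro c hc
  obtain ⟨hc0, hc2⟩ := hc
  have ha0 : (0:ℝ) < 1 - c := by linarith
  have ha1 : (1:ℝ) - c < 1 := by linarith
  have hb0 : (0:ℝ) < 2 - c := by linarith
  have hk0 : 0 < (1-c)^2/c := div_pos (by positivity) hc0
  -- basic positivity of denominators
  have hE : ∀ z : ℝ, 0 < z → 0 < Real.exp ((1-c)*z) - 1 := by
    intro z hz
    have := Real.add_one_lt_exp (ne_of_gt (mul_pos ha0 hz))
    nlinarith [mul_pos ha0 hz]
  have hD : ∀ z : ℝ, 0 < z → 0 < 1 - Real.exp (-((1-c)^2/c) * z) := by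
    intro z hz
    have : Real.exp (-((1-c)^2/c) * z) < 1 :=
      Real.exp_lt_one_iff.mpr (by nlinarith [mul_pos hk0 hz])
    linarith
  -- strict monotonicity of f
  have hfmono : StrictMonoOn
      (fun x : ℝ => (2 - c) ^ 3 * x ^ 3 * Real.exp ((2 - c) * x) /
        (Real.exp ((1 - c) * x) - 1)) (Set.Ioo (0 : ℝ) 1) := by
    intro x1 hx1 x2 hx2 h12
    have hq := q_mono ha0 ha1 hx1 hx2 h12
    simp only at hq ⊢
    have hE1 := hE x1 hx1.1
    have hE2 := hE x2 hx2.1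
    have hrw : ∀ z : ℝ, 0 < Real.exp ((1-c)*z) - 1 →
        (2-c)^3 * z^3 * Real.exp ((2-c)*z) / (Real.exp ((1-c)*z) - 1)
        = (2-c)^3 * (Real.exp ((2-c)*z) * (z^2/(Real.exp ((1-c)*z) - 1)) * z) := by
      intro z hz
      field_simp
    rw [hrw x1 hE1, hrw x2 hE2]
    apply mul_lt_mul_of_pos_left _ (pow_pos hb0 3)
    have hQ1 : 0 < x1^2/(Real.exp ((1-c)*x1) - 1) := div_pos (pow_pos hx1.1 2) hE1
    have hEx : Real.exp ((2-c)*x1) < Real.exp ((2-c)*x2) :=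
      Real.exp_lt_exp.mpr (by nlinarith)
    exact mul_lt_mul'' (mul_lt_mul'' hEx hq (Real.exp_pos _).le hQ1.le) h12
      (mul_nonneg (Real.exp_pos _).le hQ1.le) hx1.1.le
  -- strict monotonicity of g
  have hgmono : StrictMonoOn
      (fun x : ℝ => (2 - c) ^ 3 * x ^ 3 * Real.exp ((2 - c) * x) /
        ((Real.exp ((1 - c) * x) - 1) *
          (1 - Real.exp (-((1 - c) ^ 2 / c) * x)))) (Set.Ioo (0 : ℝ) 1) := by
    intro x1 hx1 x2 hx2 h12
    have hq := q_mono ha0 ha1 hx1 hx2 h12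
    have hr := r_mono hk0 hx1.1 hx2.1 h12
    simp only at hq hr ⊢
    have hE1 := hE x1 hx1.1
    have hE2 := hE x2 hx2.1
    have hD1 := hD x1 hx1.1
    have hD2 := hD x2 hx2.1
    have hrw : ∀ z : ℝ, 0 < Real.exp ((1-c)*z) - 1 →
        0 < 1 - Real.exp (-((1-c)^2/c) * z) →
        (2-c)^3 * z^3 * Real.exp ((2-c)*z) /
          ((Real.exp ((1-c)*z) - 1) * (1 - Real.exp (-((1-c)^2/c) * z)))
        = (2-c)^3 * (Real.exp ((2-c)*z) * (z^2/(Real.exp ((1-c)*z) - 1)) *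
            (z / (1 - Real.exp (-((1-c)^2/c) * z)))) := by
      intro z hz1 hz2
      field_simp
    rw [hrw x1 hE1 hD1, hrw x2 hE2 hD2]
    apply mul_lt_mul_of_pos_left _ (pow_pos hb0 3)
    have hQ1 : 0 < x1^2/(Real.exp ((1-c)*x1) - 1) := div_pos (pow_pos hx1.1 2) hE1
    have hR1 : 0 < x1/(1 - Real.exp (-((1-c)^2/c) * x1)) := div_pos hx1.1 hD1
    have hEx : Real.exp ((2-c)*x1) < Real.exp ((2-c)*x2) :=
      Real.exp_lt_exp.mpr (by nlinarith)
    exact mul_lt_mul'' (mul_lt_mul'' hEx hq (Real.exp_pos _).le hQ1.le) hr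
      (mul_nonneg (Real.exp_pos _).le hQ1.le) hR1.le
  refine ⟨hfmono, hgmono, ?_⟩
  intro x hx
  obtain ⟨hx0, hx1⟩ := hx
  set y : ℝ := (1-c)^2 * x with hy
  have hcc : (1-c)^2 < 1 := by nlinarith
  have hy0 : 0 < y := by positivity
  have hyx : y < x := by nlinarith
  have hy1 : y < 1 := by linarith
  have hym : y ∈ Set.Ioo (0:ℝ) 1 := ⟨hy0, hy1⟩
  have hxm : x ∈ Set.Ioo (0:ℝ) 1 := ⟨hx0, hx1⟩
  have hEx := hE x hx0
  have hEy := hE y hy0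
  have hDx := hD x hx0
  have hDy := hD y hy0
  -- abbreviations
  set fx : ℝ := (2-c)^3 * x^3 * Real.exp ((2-c)*x) / (Real.exp ((1-c)*x) - 1) with hfx
  set fy : ℝ := (2-c)^3 * y^3 * Real.exp ((2-c)*y) / (Real.exp ((1-c)*y) - 1) with hfy
  have hfx0 : 0 < fx := by
    rw [hfx]; exact div_pos (by positivity) hEx
  have hfy0 : 0 < fy := by
    rw [hfy]; exact div_pos (by positivity) hEy
  -- f(x) ≤ 16 e² x²
  have hstep1 : fx ≤ 16 * Real.exp 2 * x^2 := by
    have hax : (1-c)*x ≤ Real.exp ((1-c)*x) - 1 := by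
      have := Real.add_one_le_exp ((1-c)*x); linarith
    have hN0 : 0 ≤ (2-c)^3 * x^3 * Real.exp ((2-c)*x) :=
      mul_nonneg (mul_nonneg (pow_pos hb0 3).le (pow_pos hx0 3).le) (Real.exp_pos _).le
    have h1 : fx ≤ (2-c)^3 * x^3 * Real.exp ((2-c)*x) / ((1-c)*x) := by
      rw [hfx]
      exact div_le_div_of_nonneg_left hN0 (mul_pos ha0 hx0) hax
    have h2 : (2-c)^3 * x^3 * Real.exp ((2-c)*x) / ((1-c)*x)
        = (2-c)^3 * x^2 * Real.exp ((2-c)*x) / (1-c) := by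
      field_simp
    have he : Real.exp ((2-c)*x) ≤ Real.exp 2 := Real.exp_le_exp.mpr (by nlinarith)
    have hb3 : (2-c)^3 ≤ 8 := by nlinarith
    have hnum : (2-c)^3 * x^2 * Real.exp ((2-c)*x) ≤ 8 * x^2 * Real.exp 2 := by
      calc (2-c)^3 * x^2 * Real.exp ((2-c)*x)
          ≤ 8 * x^2 * Real.exp ((2-c)*x) := by
            nlinarith [mul_nonneg (mul_nonneg (show (0:ℝ) ≤ 8 - (2-c)^3 by linarith)
              (sq_nonneg x)) (Real.exp_pos ((2-c)*x)).le]
        _ ≤ 8 * x^2 * Real.exp 2 := by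
            nlinarith [mul_nonneg (mul_nonneg (show (0:ℝ) ≤ (8:ℝ) by norm_num)
              (sq_nonneg x)) (show (0:ℝ) ≤ Real.exp 2 - Real.exp ((2-c)*x) by linarith)]
    have h3 : (2-c)^3 * x^2 * Real.exp ((2-c)*x) / (1-c)
        ≤ (8 * x^2 * Real.exp 2) / (1/2) :=
      div_le_div₀ (by positivity) hnum (by norm_num) (by linarith)
    calc fx ≤ (2-c)^3 * x^3 * Real.exp ((2-c)*x) / ((1-c)*x) := h1
      _ = (2-c)^3 * x^2 * Real.exp ((2-c)*x) / (1-c) := h2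
      _ ≤ (8 * x^2 * Real.exp 2) / (1/2) := h3
      _ = 16 * Real.exp 2 * x^2 := by ring
  -- f(y) ≥ (1-c)^6 e^{-s} f(x) where s = c(2-c)² x
  set s : ℝ := c * (2-c)^2 * x with hs
  have hs0 : 0 ≤ s := by positivity
  have hs4 : s ≤ 4 * c := by rw [hs]; nlinarith
  have hexpy : Real.exp ((2-c)*y) = Real.exp ((2-c)*x) * Real.exp (-s) := by
    rw [← Real.exp_add]
    congr 1
    rw [hy, hs]; ring
  have hy3 : y^3 = (1-c)^6 * x^3 := by rw [hy]; ring
  have hstep2 : (1-c)^6 * Real.exp (-s) * fx ≤ fy := by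
    have hEyx : Real.exp ((1-c)*y) - 1 ≤ Real.exp ((1-c)*x) - 1 := by
      have : Real.exp ((1-c)*y) ≤ Real.exp ((1-c)*x) :=
        Real.exp_le_exp.mpr (by nlinarith)
      linarith
    have hNy0 : 0 ≤ (2-c)^3 * y^3 * Real.exp ((2-c)*y) :=
      mul_nonneg (mul_nonneg (pow_pos hb0 3).le (pow_pos hy0 3).le) (Real.exp_pos _).le
    have h1 : (2-c)^3 * y^3 * Real.exp ((2-c)*y) / (Real.exp ((1-c)*x) - 1) ≤ fy := by
      rw [hfy]
      exact div_le_div_of_nonneg_left hNy0 hEy hEyx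
    have h2 : (2-c)^3 * y^3 * Real.exp ((2-c)*y) / (Real.exp ((1-c)*x) - 1)
        = (1-c)^6 * Real.exp (-s) * fx := by
      rw [hfx, hy3, hexpy]
      ring
    rw [h2] at h1
    exact h1
  -- 1 - A e^{-s} ∈ [0, 10c]
  have hA6 : 1 - 6*c ≤ (1-c)^6 := by
    have h := one_add_mul_le_pow (show (-2:ℝ) ≤ -c by linarith) 6
    norm_num at h
    nlinarith [h]
  have hA1 : (1-c)^6 ≤ 1 := pow_le_one₀ ha0.le ha1.le
  have hA0 : (0:ℝ) ≤ (1-c)^6 := by positivity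
  have hBle : Real.exp (-s) ≤ 1 := Real.exp_le_one_iff.mpr (by linarith)
  have hBge : 1 - s ≤ Real.exp (-s) := by
    have := Real.add_one_le_exp (-s); linarith
  have hfrac0 : 0 ≤ 1 - (1-c)^6 * Real.exp (-s) := by
    nlinarith [Real.exp_pos (-s)]
  have hfrac : 1 - (1-c)^6 * Real.exp (-s) ≤ 10 * c := by
    nlinarith [mul_nonneg (show (0:ℝ) ≤ 1-(1-c)^6 by linarith)
      (show (0:ℝ) ≤ 1 - Real.exp (-s) by linarith)]
  -- the f bound
  have hfbound : fx - fy ≤ 160 * Real.exp 2 * c * x ^ 2 := by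
    calc fx - fy ≤ fx - (1-c)^6 * Real.exp (-s) * fx := by linarith [hstep2]
      _ = fx * (1 - (1-c)^6 * Real.exp (-s)) := by ring
      _ ≤ (16 * Real.exp 2 * x^2) * (10 * c) :=
          mul_le_mul hstep1 hfrac hfrac0 (by positivity)
      _ = 160 * Real.exp 2 * c * x ^ 2 := by ring
  -- g pieces
  set Dx : ℝ := 1 - Real.exp (-((1-c)^2/c) * x) with hDxdef
  set Dy : ℝ := 1 - Real.exp (-((1-c)^2/c) * y) with hDydef
  have hDyx : Dy ≤ Dx := by
    rw [hDxdef, hDydef]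
    have : Real.exp (-((1-c)^2/c) * x) ≤ Real.exp (-((1-c)^2/c) * y) :=
      Real.exp_le_exp.mpr (by nlinarith [mul_pos hk0 hx0, mul_pos hk0 hy0,
        mul_le_mul_of_nonneg_left hyx.le hk0.le])
    linarith
  have hgx : (2-c)^3 * x^3 * Real.exp ((2-c)*x) /
      ((Real.exp ((1-c)*x) - 1) * Dx) = fx / Dx := by
    rw [hfx, div_div]
  have hgy : (2-c)^3 * y^3 * Real.exp ((2-c)*y) /
      ((Real.exp ((1-c)*y) - 1) * Dy) = fy / Dy := by
    rw [hfy, div_div]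
  have hgyineq : fy / Dx ≤ fy / Dy :=
    div_le_div_of_nonneg_left hfy0.le hDy hDyx
  refine ⟨?_, ?_, ?_, ?_⟩
  · simp only
    have := hfmono hym hxm hyx
    simp only at this
    linarith
  · simp only
    linarith [hfbound]
  · simp only
    have := hgmono hym hxm hyx
    simp only at this
    linarith
  · simp only
    rw [hgx, hgy]
    have h1 : fx / Dx - fy / Dy ≤ (fx - fy) / Dx := by
      have : (fx - fy)/Dx = fx/Dx - fy/Dx := by ring
      linarith [hgyineq, this]
    have h2 : (fx - fy) / Dx ≤ (160 * Real.exp 2 * c * x^2) / Dx :=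
      div_le_div_of_nonneg_right hfbound hDx.le
    calc fx / Dx - fy / Dy ≤ (fx - fy) / Dx := h1
      _ ≤ (160 * Real.exp 2 * c * x^2) / Dx := h2
      _ = 160 * Real.exp 2 * (c / Dx) * x ^ 2 := by ring
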